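/- Let a, b > 0 with a ∉ ℤ and b ∉ ℤ. Then there is no finite partition of [0,a] × [0,b] into axis-parallel rectangles each having an integer side; namely, for g(x) = e^{2πix}, ∫∫_{[s,s+w]×[t,t+h]} g(x)g(y) dxdy = 0 whenever w ∈ ℤ or h ∈ ℤ, but ∫∫_{[0,a]×[0,b]} g(x)g(y) dxdy ≠ 0 when a ∉ ℤ and b ∉ ℤ. -/

import Mathlib

/-- A closed axis-parallel rectangle. -/
def rect (x y w h : ℝ) : Set (ℝ × ℝ) := Set.Icc x (x + w) ×ˢ Set.Icc y (y + h)

/-- The corresponding open rectangle. -/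
def orect (x y w h : ℝ) : Set (ℝ × ℝ) := Set.Ioo x (x + w) ×ˢ Set.Ioo y (y + h)


open MeasureTheory Complex intervalIntegral

noncomputable def gC : ℝ → ℂ := fun p => Complex.exp (2 * Real.pi * Complex.I * p)

lemma cpi_ne : (2 * (Real.pi:ℂ) * Complex.I) ≠ 0 := by
  simp [Real.pi_ne_zero, Complex.I_ne_zero, Complex.ofReal_ne_zero]

lemma gC_int (s w : ℝ) :
    ∫ p in s..(s+w), gC p = (gC (s+w) - gC s) / (2 * Real.pi * Complex.I) :=
  integral_exp_mul_complex cpi_ne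

lemma gC_add (s w : ℝ) : gC (s+w) = gC s * gC w := by
  unfold gC
  rw [← Complex.exp_add]
  congr 1
  push_cast
  ring

lemma gC_ne_zero (s : ℝ) : gC s ≠ 0 := Complex.exp_ne_zero _

lemma gC_int_eq (s w : ℝ) :
    ∫ p in s..(s+w), gC p = gC s * (gC w - 1) / (2 * Real.pi * Complex.I) := by
  rw [gC_int, gC_add]; ring

lemma gC_one_of_int (w : ℝ) (hw : ∃ m : ℤ, w = m) : gC w = 1 := by
  obtain ⟨m, rfl⟩ := hw
  unfold gC
  rw [show 2 * (Real.pi:ℂ) * Complex.I * (m:ℝ) = (m:ℤ) * (2 * Real.pi * Complex.I) by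
    push_cast; ring]
  exact Complex.exp_int_mul_two_pi_mul_I m

lemma gC_ne_one (w : ℝ) (hw : ¬ ∃ m : ℤ, w = m) : gC w ≠ 1 := by
  intro h
  apply hw
  rw [gC, Complex.exp_eq_one_iff] at h
  obtain ⟨n, hn⟩ := h
  refine ⟨n, ?_⟩
  have : (w:ℂ) = (n:ℂ) := by
    have h2 : (2 * (Real.pi:ℂ) * Complex.I) * w = (2 * (Real.pi:ℂ) * Complex.I) * n := by
      rw [hn]; ring
    exact mul_left_cancel₀ cpi_ne h2
  exact_mod_cast this

lemma gC_int_ne_zero (w : ℝ) (hw : ¬ ∃ m : ℤ, w = m) :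
    (∫ p in (0:ℝ)..(0+w), gC p) ≠ 0 := by
  rw [gC_int_eq]
  apply div_ne_zero _ cpi_ne
  exact mul_ne_zero (gC_ne_zero 0) (sub_ne_zero.2 (gC_ne_one w hw))

lemma double_int (s t w h : ℝ) :
    (∫ p in s..(s+w), ∫ q in t..(t+h), gC p * gC q)
      = (∫ p in s..(s+w), gC p) * (∫ q in t..(t+h), gC q) := by
  have h1 : ∀ p : ℝ, (∫ q in t..(t+h), gC p * gC q) = gC p * ∫ q in t..(t+h), gC q := by
    intro p; exact intervalIntegral.integral_const_mul _ _
  simp_rw [h1]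
  exact intervalIntegral.integral_mul_const _ _


lemma gC_cont : Continuous gC := by unfold gC; fun_prop

lemma rect_meas (x y w h : ℝ) : MeasurableSet (rect x y w h) :=
  measurableSet_Icc.prod measurableSet_Icc

lemma rect_vol (x y w h : ℝ) :
    volume (rect x y w h) = ENNReal.ofReal (x + w - x) * ENNReal.ofReal (y + h - y) := by
  rw [rect, MeasureTheory.Measure.volume_eq_prod, Measure.prod_prod, Real.volume_Icc,
    Real.volume_Icc]

lemma orect_vol (x y w h : ℝ) :
    volume (orect x y w h) = ENNReal.ofReal (x + w - x) * ENNReal.ofReal (y + h - y) := by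
  rw [orect, MeasureTheory.Measure.volume_eq_prod, Measure.prod_prod, Real.volume_Ioo,
    Real.volume_Ioo]

lemma diff_null (x y w h : ℝ) : volume (rect x y w h \ orect x y w h) = 0 := by
  have hsub : orect x y w h ⊆ rect x y w h :=
    Set.prod_mono Set.Ioo_subset_Icc_self Set.Ioo_subset_Icc_self
  have hmeas : NullMeasurableSet (orect x y w h) volume :=
    (measurableSet_Ioo.prod measurableSet_Ioo).nullMeasurableSet
  have hfin : volume (orect x y w h) ≠ ⊤ := by
    rw [orect_vol]; exact ENNReal.mul_ne_top ENNReal.ofReal_ne_top ENNReal.ofReal_ne_top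
  rw [measure_diff hsub hmeas hfin, rect_vol, orect_vol, tsub_self]

lemma rect_aedisjoint {x1 y1 w1 h1 x2 y2 w2 h2 : ℝ}
    (hd : Disjoint (orect x1 y1 w1 h1) (orect x2 y2 w2 h2)) :
    AEDisjoint volume (rect x1 y1 w1 h1) (rect x2 y2 w2 h2) := by
  apply measure_mono_null
    (t := (rect x1 y1 w1 h1 \ orect x1 y1 w1 h1) ∪ (rect x2 y2 w2 h2 \ orect x2 y2 w2 h2))
  · rintro p ⟨hp1, hp2⟩
    by_cases h : p ∈ orect x1 y1 w1 h1
    · exact Or.inr ⟨hp2, fun h2 => (Set.disjoint_left.1 hd h) h2⟩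
    · exact Or.inl ⟨hp1, h⟩
  · exact measure_union_null (diff_null _ _ _ _) (diff_null _ _ _ _)

lemma rect_integral (x y w h : ℝ) (hw : 0 ≤ w) (hh : 0 ≤ h) :
    ∫ p in rect x y w h, gC p.1 * gC p.2 =
      (∫ p in x..(x+w), gC p) * (∫ q in y..(y+h), gC q) := by
  rw [rect, MeasureTheory.Measure.volume_eq_prod, setIntegral_prod_mul,
    integral_Icc_eq_integral_Ioc, integral_Icc_eq_integral_Ioc,
    intervalIntegral.integral_of_le (by linarith), intervalIntegral.integral_of_le (by linarith)]

lemma tile_zero (x y w h : ℝ) (hw : 0 < w) (hh : 0 < h)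
    (hint : (∃ m : ℤ, w = m) ∨ (∃ m : ℤ, h = m)) :
    ∫ p in rect x y w h, gC p.1 * gC p.2 = 0 := by
  rw [rect_integral x y w h hw.le hh.le]
  rcases hint with hw' | hh'
  · rw [gC_int_eq x w, gC_one_of_int w hw']; simp
  · rw [gC_int_eq y h, gC_one_of_int h hh']; simp

lemma big_ne (a b : ℝ) (ha : 0 < a) (hb : 0 < b)
    (hna : ¬ ∃ m : ℤ, a = m) (hnb : ¬ ∃ m : ℤ, b = m) :
    ∫ p in rect 0 0 a b, gC p.1 * gC p.2 ≠ 0 := by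
  rw [rect_integral 0 0 a b ha.le hb.le]
  exact mul_ne_zero (gC_int_ne_zero a hna) (gC_int_ne_zero b hnb)


/-- If `a, b > 0` and neither is an integer, then `[0,a] × [0,b]` admits no finite
partition into axis-parallel rectangles each with an integer side; indeed, with
`g(x) = e^{2πix}`, the integral of `g(x)g(y)` over any rectangle with an integer side
vanishes, while the integral over `[0,a] × [0,b]` does not. -/
theorem stmt18 (a b : ℝ) (ha : 0 < a) (hb : 0 < b)
    (hna : ¬ ∃ m : ℤ, a = m) (hnb : ¬ ∃ m : ℤ, b = m) :
    (¬ ∃ (n : ℕ) (x y w h : Fin n → ℝ),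
      (∀ i, 0 < w i) ∧ (∀ i, 0 < h i) ∧
      (∀ i, (∃ m : ℤ, w i = m) ∨ (∃ m : ℤ, h i = m)) ∧
      (Pairwise fun i j =>
        Disjoint (orect (x i) (y i) (w i) (h i)) (orect (x j) (y j) (w j) (h j))) ∧
      (⋃ i, rect (x i) (y i) (w i) (h i)) = rect 0 0 a b) ∧
    (∀ s t w h : ℝ, ((∃ m : ℤ, w = m) ∨ (∃ m : ℤ, h = m)) →
      (∫ p in s..(s + w), ∫ q in t..(t + h),
        Complex.exp (2 * Real.pi * Complex.I * p) *
          Complex.exp (2 * Real.pi * Complex.I * q)) = 0) ∧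
    (∫ p in (0:ℝ)..a, ∫ q in (0:ℝ)..b,
      Complex.exp (2 * Real.pi * Complex.I * p) *
        Complex.exp (2 * Real.pi * Complex.I * q)) ≠ 0 := by
  refine ⟨?_, ?_, ?_⟩
  · rintro ⟨n, x, y, w, h, hw, hh, hint, hdisj, hcover⟩
    have hNM : ∀ i : Fin n, NullMeasurableSet (rect (x i) (y i) (w i) (h i)) volume :=
      fun i => (rect_meas _ _ _ _).nullMeasurableSet
    have hAED : Pairwise (Function.onFun (AEDisjoint volume) fun i : Fin n =>
        rect (x i) (y i) (w i) (h i)) :=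
      fun i j hij => rect_aedisjoint (hdisj hij)
    have hInt : IntegrableOn (fun p : ℝ × ℝ => gC p.1 * gC p.2)
        (⋃ i, rect (x i) (y i) (w i) (h i)) volume := by
      rw [hcover, rect, Set.Icc_prod_Icc]
      exact (gC_cont.comp continuous_fst |>.mul (gC_cont.comp continuous_snd)).integrableOn_Icc
    have key := MeasureTheory.integral_iUnion_ae hNM hAED hInt
    rw [hcover] at key
    have hz : ∀ i : Fin n,
        (∫ p in rect (x i) (y i) (w i) (h i), gC p.1 * gC p.2) = 0 :=
      fun i => tile_zero _ _ _ _ (hw i) (hh i) (hint i)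
    simp_rw [hz, tsum_zero] at key
    exact big_ne a b ha hb hna hnb key
  · intro s t w h hint
    show (∫ p in s..(s + w), ∫ q in t..(t + h), gC p * gC q) = 0
    rw [double_int]
    rcases hint with hw' | hh'
    · rw [gC_int_eq s w, gC_one_of_int w hw']; simp
    · rw [gC_int_eq t h, gC_one_of_int h hh']; simp
  · show (∫ p in (0:ℝ)..a, ∫ q in (0:ℝ)..b, gC p * gC q) ≠ 0
    have hd := double_int 0 0 a b
    rw [zero_add a, zero_add b] at hd
    rw [hd]
    have h1 := gC_int_ne_zero a hna
    have h2 := gC_int_ne_zero b hnb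
    rw [zero_add a] at h1
    rw [zero_add b] at h2
    exact mul_ne_zero h1 h2
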